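/- arXiv:2202.02583 — 6 statements merged into one kernel-verified Lean document; each statement's English description precedes it below -/
import Mathlib

section
/- For every ξ ∈ ℤ, the synchronous temporal robustness satisfies η^c(x_ξ) ≥ η^c(x) − |ξ|. -/
open scoped Classical

noncomputable section

def shift {α : Type*} (x : ℤ → α) (κ : ℤ) : ℤ → α := fun t => x (t + κ)

def ashift {n : ℕ} (x : ℤ → Fin n → ℝ) (κ : Fin n → ℤ) : ℤ → Fin n → ℝ :=
  fun t i => x (t + κ i) i

def beta {n : ℕ} (c : (Fin n → ℝ) → ℤ → ℝ) (x : ℤ → Fin n → ℝ) : ℤ :=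
  if ∀ t : ℤ, 0 ≤ c (x t) t then 1 else -1

def absE (a : EReal) : EReal := max a (-a)

def eta {n : ℕ} (c : (Fin n → ℝ) → ℤ → ℝ) (x : ℤ → Fin n → ℝ) : EReal :=
  ((beta c x : ℝ) : EReal) * sSup ((fun τ : ℕ => ((τ : ℝ) : EReal)) ''
    {τ : ℕ | ∀ κ : ℤ, |κ| ≤ (τ : ℤ) → beta c (shift x κ) = beta c x})

def theta {n : ℕ} (c : (Fin n → ℝ) → ℤ → ℝ) (x : ℤ → Fin n → ℝ) : EReal :=
  ((beta c x : ℝ) : EReal) * sSup ((fun τ : ℕ => ((τ : ℝ) : EReal)) ''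
    {τ : ℕ | ∀ κ : Fin n → ℤ, (∀ i, |κ i| ≤ (τ : ℤ)) → beta c (ashift x κ) = beta c x})

/-! Write `η(x) = β(x) · r(x)`, where the radius `r(x)` is the largest `τ` such that all shifts
`x_κ` with `|κ| ≤ τ` have the sign of `x`. Since `(x_ξ)_κ = x_{κ+ξ}`, if `x_ξ` has the sign of `x`
then `r(x_ξ) ≥ r(x) - |ξ|`; if the signs differ then `r(x) + r(x_ξ) < |ξ|`, as otherwise some `x_m`
would lie within both radii and carry both signs. -/

lemma shift_shift {α : Type*} (x : ℤ → α) (a b : ℤ) :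
    shift (shift x a) b = shift x (b + a) := by
  funext t
  simp only [shift, add_assoc]

lemma shift_zero {α : Type*} (x : ℤ → α) : shift x 0 = x := by
  funext t
  simp only [shift, add_zero]

section

variable {n : ℕ} (c : (Fin n → ℝ) → ℤ → ℝ)

def robustRadii (x : ℤ → Fin n → ℝ) : Set ℕ :=
  {τ : ℕ | ∀ κ : ℤ, |κ| ≤ (τ : ℤ) → beta c (shift x κ) = beta c x}

def robustRadius (x : ℤ → Fin n → ℝ) : EReal :=
  sSup ((fun τ : ℕ => ((τ : ℝ) : EReal)) '' robustRadii c x)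

lemma eta_eq_beta_mul_robustRadius (x : ℤ → Fin n → ℝ) :
    eta c x = ((beta c x : ℝ) : EReal) * robustRadius c x := rfl

lemma beta_eq_one_or_neg_one (x : ℤ → Fin n → ℝ) : beta c x = 1 ∨ beta c x = -1 := by
  unfold beta
  split_ifs <;> simp

lemma zero_mem_robustRadii (x : ℤ → Fin n → ℝ) : 0 ∈ robustRadii c x := by
  intro κ hκ
  rw [abs_nonpos_iff.mp (show |κ| ≤ 0 by exact_mod_cast hκ), shift_zero]

lemma le_robustRadius {x : ℤ → Fin n → ℝ} {τ : ℕ} (hτ : τ ∈ robustRadii c x) :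
    ((τ : ℝ) : EReal) ≤ robustRadius c x :=
  le_sSup (Set.mem_image_of_mem _ hτ)

lemma robustRadius_nonneg (x : ℤ → Fin n → ℝ) : 0 ≤ robustRadius c x := by
  simpa using le_robustRadius c (zero_mem_robustRadii c x)

lemma robustRadius_le_of_forall_le {x : ℤ → Fin n → ℝ} {b : EReal}
    (h : ∀ τ ∈ robustRadii c x, ((τ : ℝ) : EReal) ≤ b) : robustRadius c x ≤ b :=
  sSup_le (Set.forall_mem_image.mpr h)

lemma exists_robustRadii_shift_of_beta_eq {x : ℤ → Fin n → ℝ} {ξ : ℤ}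
    (hβ : beta c (shift x ξ) = beta c x) {τ : ℕ} (hτ : τ ∈ robustRadii c x) :
    ∃ ρ ∈ robustRadii c (shift x ξ), (τ : ℤ) ≤ ρ + |ξ| := by
  rcases le_or_gt τ ξ.natAbs with hle | hlt
  · exact ⟨0, zero_mem_robustRadii c _, by rw [Int.abs_eq_natAbs]; omega⟩
  · refine ⟨τ - ξ.natAbs, fun κ hκ => ?_, by rw [Int.abs_eq_natAbs]; omega⟩
    rw [shift_shift, hτ (κ + ξ) ?_, hβ]
    have := abs_add_le κ ξ
    rw [Int.abs_eq_natAbs ξ] at this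
    omega

lemma add_lt_abs_of_beta_ne {x : ℤ → Fin n → ℝ} {ξ : ℤ}
    (hβ : beta c (shift x ξ) ≠ beta c x) {τ σ : ℕ}
    (hτ : τ ∈ robustRadii c x) (hσ : σ ∈ robustRadii c (shift x ξ)) :
    (τ : ℤ) + σ < |ξ| := by
  by_contra! h
  have hτξ : (τ : ℤ) < |ξ| := lt_of_not_ge fun hξ => hβ (hτ ξ hξ)
  obtain ⟨m, hm, hmξ⟩ : ∃ m : ℤ, |m| ≤ τ ∧ |m - ξ| ≤ σ := by
    rcases le_or_gt 0 ξ with hξ | hξ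
    · refine ⟨τ, by simp, ?_⟩
      rw [abs_of_nonneg hξ] at h hτξ
      rw [abs_sub_comm, abs_of_nonneg (by omega)]
      omega
    · refine ⟨-τ, by simp, ?_⟩
      rw [abs_of_neg hξ] at h hτξ
      rw [abs_of_nonneg (by omega)]
      omega
  have := hσ (m - ξ) hmξ
  rw [shift_shift, sub_add_cancel, hτ m hm] at this
  exact hβ this.symm

lemma robustRadius_le_shift_add_of_beta_eq {x : ℤ → Fin n → ℝ} {ξ : ℤ}
    (hβ : beta c (shift x ξ) = beta c x) :
    robustRadius c x ≤ robustRadius c (shift x ξ) + ((|ξ| : ℝ) : EReal) := by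
  refine robustRadius_le_of_forall_le c fun τ hτ => ?_
  obtain ⟨ρ, hρ, hτρ⟩ := exists_robustRadii_shift_of_beta_eq c hβ hτ
  calc ((τ : ℝ) : EReal) ≤ ((ρ : ℝ) : EReal) + ((|ξ| : ℝ) : EReal) := by exact_mod_cast hτρ
    _ ≤ _ := by gcongr; exact le_robustRadius c hρ

lemma robustRadius_add_shift_le_of_beta_ne {x : ℤ → Fin n → ℝ} {ξ : ℤ}
    (hβ : beta c (shift x ξ) ≠ beta c x) :
    robustRadius c x + robustRadius c (shift x ξ) ≤ ((|ξ| : ℝ) : EReal) := by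
  refine EReal.add_le_of_forall_lt fun a ha b hb => ?_
  obtain ⟨_, ⟨τ, hτ, rfl⟩, haτ⟩ := lt_sSup_iff.mp ha
  obtain ⟨_, ⟨σ, hσ, rfl⟩, hbσ⟩ := lt_sSup_iff.mp hb
  calc a + b ≤ ((τ : ℝ) : EReal) + ((σ : ℝ) : EReal) := add_le_add haτ.le hbσ.le
    _ ≤ ((|ξ| : ℝ) : EReal) := by exact_mod_cast (add_lt_abs_of_beta_ne c hβ hτ hσ).le

end

/-- η^c(x_ξ) ≥ η^c(x) − |ξ|. -/
theorem stmt1 {n : ℕ} (c : (Fin n → ℝ) → ℤ → ℝ) (x : ℤ → Fin n → ℝ) (ξ : ℤ) :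
    eta c (shift x ξ) ≥ eta c x - ((|ξ| : ℝ) : EReal) := by
  rw [ge_iff_le, eta_eq_beta_mul_robustRadius, eta_eq_beta_mul_robustRadius]
  set d : EReal := ((|ξ| : ℝ) : EReal)
  have hd : 0 ≤ d := EReal.coe_nonneg.mpr (abs_nonneg _)
  have hA := robustRadius_nonneg c x
  have hB := robustRadius_nonneg c (shift x ξ)
  rcases beta_eq_one_or_neg_one c x with hx | hx <;>
    rcases beta_eq_one_or_neg_one c (shift x ξ) with hxξ | hxξ <;>
    simp only [hx, hxξ, Int.cast_one, Int.cast_neg, EReal.coe_one, EReal.coe_neg, EReal.neg_mul,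
      one_mul]
  · exact EReal.sub_le_of_le_add (robustRadius_le_shift_add_of_beta_eq c (hxξ.trans hx.symm))
  · refine EReal.sub_le_of_le_add ?_
    rw [add_comm, ← sub_eq_add_neg, EReal.le_sub_iff_add_le (by simp [d]) (by simp [d])]
    exact robustRadius_add_shift_le_of_beta_ne c (by rw [hx, hxξ]; decide)
  · exact EReal.sub_le_of_le_add
      ((EReal.neg_le.mpr (by simpa using hA)).trans (le_add_of_le_of_nonneg hB hd))
  · have h := robustRadius_le_shift_add_of_beta_eq c (x := shift x ξ) (ξ := -ξ)
      (by rw [shift_shift, neg_add_cancel, shift_zero, hx, hxξ])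
    rw [shift_shift, neg_add_cancel, shift_zero, Int.cast_neg, abs_neg] at h
    rw [← EReal.neg_add (by simp [d]) (by simp [d]), EReal.neg_le_neg_iff]
    exact h
end
end

section
/- Let X be a discrete-time stochastic process and c a measurable constraint function. Then the synchronous temporal robustness ω ↦ η^c(X(·,ω)) is a measurable function from Ω to the extended integers, i.e., η^c(X) is a random variable. -/
open scoped Classical

noncomputable section

/-! Since time is discrete, everything is countable: `β^c` of a shifted path is the indicator
of a countable intersection of measurable events, and the supremum defining `η^c` is a
countable supremum of the values `τ` over the measurable events "every shift by at most `τ`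
preserves `β^c`". -/

theorem measurable_sSup_image {ι α Ω : Type*} [Countable ι] [MeasurableSpace Ω]
    [CompleteLinearOrder α] [TopologicalSpace α] [OrderTopology α] [SecondCountableTopology α]
    [MeasurableSpace α] [BorelSpace α] (f : ι → α) {S : Ω → Set ι}
    (hS : ∀ i, MeasurableSet {ω | i ∈ S ω}) :
    Measurable fun ω => sSup (f '' S ω) := by
  simp_rw [sSup_image, iSup_eq_if]
  exact Measurable.iSup fun i => Measurable.ite (hS i) measurable_const measurable_const

section Paths

variable {n : ℕ} {Ω : Type*} [MeasurableSpace Ω] {X : ℤ → Ω → Fin n → ℝ}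
  {c : (Fin n → ℝ) → ℤ → ℝ}

theorem measurable_beta (hX : ∀ t, Measurable (X t)) (hc : ∀ t, Measurable fun z => c z t) :
    Measurable fun ω => beta c (fun t => X t ω) := by
  have hsat : MeasurableSet {ω | ∀ t, 0 ≤ c (X t ω) t} := by
    simp only [Set.ofPred_forall]
    exact MeasurableSet.iInter fun t =>
      measurableSet_le measurable_const ((hc t).comp (hX t))
  exact Measurable.ite hsat measurable_const measurable_const

theorem measurableSet_forall_abs_le_beta_shift_eq (hX : ∀ t, Measurable (X t))
    (hc : ∀ t, Measurable fun z => c z t) (τ : ℕ) :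
    MeasurableSet {ω | ∀ κ : ℤ, |κ| ≤ (τ : ℤ) →
      beta c (shift (fun t => X t ω) κ) = beta c (fun t => X t ω)} := by
  rw [Set.ofPred_forall]
  refine MeasurableSet.iInter fun κ => MeasurableSet.imp (MeasurableSet.const _) ?_
  exact measurableSet_eq_fun (measurable_beta (fun t => hX (t + κ)) hc) (measurable_beta hX hc)

end Paths

/-- η^c(X) is a random variable. -/
theorem stmt6 {n : ℕ} {Ω : Type*} [MeasurableSpace Ω]
    (X : ℤ → Ω → Fin n → ℝ) (c : (Fin n → ℝ) → ℤ → ℝ)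
    (hX : ∀ t : ℤ, Measurable (X t)) (hc : ∀ t : ℤ, Measurable (fun z => c z t)) :
    Measurable (fun ω => eta c (fun t => X t ω)) := by
  have hsign : Measurable fun ω => ((beta c (fun t => X t ω) : ℝ) : EReal) :=
    (measurable_of_countable fun k : ℤ => ((k : ℝ) : EReal)).comp (measurable_beta hX hc)
  exact hsign.mul <| measurable_sSup_image _ (measurableSet_forall_abs_le_beta_shift_eq hX hc)
end
end

section
/- Let X be a discrete-time stochastic process and c a measurable constraint function. Then the asynchronous temporal robustness ω ↦ θ^c(X(·,ω)) is measurable, i.e., θ^c(X) is a random variable. -/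
open scoped Classical

noncomputable section

lemma measurable_beta_comp {n : ℕ} {Ω : Type*} [MeasurableSpace Ω]
    (c : (Fin n → ℝ) → ℤ → ℝ) (Y : ℤ → Ω → Fin n → ℝ)
    (hY : ∀ t : ℤ, Measurable (Y t)) (hc : ∀ t : ℤ, Measurable (fun z => c z t)) :
    Measurable (fun ω => beta c (fun t => Y t ω)) := by
  have hset : MeasurableSet {ω | ∀ t : ℤ, 0 ≤ c (Y t ω) t} := by
    have : {ω | ∀ t : ℤ, 0 ≤ c (Y t ω) t} = ⋂ t : ℤ, {ω | 0 ≤ c (Y t ω) t} := by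
      ext ω; simp
    rw [this]
    exact MeasurableSet.iInter fun t =>
      measurableSet_le measurable_const ((hc t).comp (hY t))
  unfold beta
  exact Measurable.ite hset measurable_const measurable_const

/-- θ^c(X) is a random variable. -/
theorem stmt7 {n : ℕ} {Ω : Type*} [MeasurableSpace Ω]
    (X : ℤ → Ω → Fin n → ℝ) (c : (Fin n → ℝ) → ℤ → ℝ)
    (hX : ∀ t : ℤ, Measurable (X t)) (hc : ∀ t : ℤ, Measurable (fun z => c z t)) :
    Measurable (fun ω => theta c (fun t => X t ω)) := by
  -- beta of shifted processes is measurable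
  have hb : ∀ κ : Fin n → ℤ,
      Measurable (fun ω => beta c (ashift (fun t => X t ω) κ)) := by
    intro κ
    have : (fun ω => beta c (ashift (fun t => X t ω) κ)) =
        fun ω => beta c (fun t => (fun ω' => fun i => X (t + κ i) ω' i) ω) := rfl
    rw [this]
    exact measurable_beta_comp c _
      (fun t => measurable_pi_lambda _ fun i => (measurable_pi_apply i).comp (hX (t + κ i))) hc
  have hb0 : Measurable (fun ω => beta c (fun t => X t ω)) :=
    measurable_beta_comp c X hX hc
  -- the set where the τ-condition holds, measurable in ω
  have hP : ∀ τ : ℕ, MeasurableSet {ω : Ω | ∀ κ : Fin n → ℤ, (∀ i, |κ i| ≤ (τ : ℤ)) →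
      beta c (ashift (fun t => X t ω) κ) = beta c (fun t => X t ω)} := by
    intro τ
    have : {ω : Ω | ∀ κ : Fin n → ℤ, (∀ i, |κ i| ≤ (τ : ℤ)) →
        beta c (ashift (fun t => X t ω) κ) = beta c (fun t => X t ω)} =
        ⋂ κ : Fin n → ℤ, ⋂ (_ : ∀ i, |κ i| ≤ (τ : ℤ)),
          {ω | beta c (ashift (fun t => X t ω) κ) = beta c (fun t => X t ω)} := by
      ext ω; simp [Set.mem_iInter]
    rw [this]
    exact MeasurableSet.iInter fun κ => MeasurableSet.iInter fun _ =>
      measurableSet_eq_fun (hb κ) hb0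
  -- rewrite sSup of image as an iSup
  have hG : Measurable (fun ω => sSup ((fun τ : ℕ => ((τ : ℝ) : EReal)) ''
      {τ : ℕ | ∀ κ : Fin n → ℤ, (∀ i, |κ i| ≤ (τ : ℤ)) →
        beta c (ashift (fun t => X t ω) κ) = beta c (fun t => X t ω)})) := by
    have heq : (fun ω => sSup ((fun τ : ℕ => ((τ : ℝ) : EReal)) ''
        {τ : ℕ | ∀ κ : Fin n → ℤ, (∀ i, |κ i| ≤ (τ : ℤ)) →
          beta c (ashift (fun t => X t ω) κ) = beta c (fun t => X t ω)})) =
        (fun ω => ⨆ τ : ℕ, if (∀ κ : Fin n → ℤ, (∀ i, |κ i| ≤ (τ : ℤ)) →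
          beta c (ashift (fun t => X t ω) κ) = beta c (fun t => X t ω))
          then ((τ : ℝ) : EReal) else ⊥) := by
      funext ω
      rw [sSup_image]
      congr 1
      funext τ
      simp only [Set.mem_setOf_eq]
      by_cases h : ∀ κ : Fin n → ℤ, (∀ i, |κ i| ≤ (τ : ℤ)) →
          beta c (ashift (fun t => X t ω) κ) = beta c (fun t => X t ω)
      · rw [iSup_pos h, if_pos h]
      · rw [iSup_neg h, if_neg h]
    rw [heq]
    exact Measurable.iSup fun τ => Measurable.ite (hP τ) measurable_const measurable_const
  -- conclude
  have key : (fun ω => theta c (fun t => X t ω)) =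
      fun ω => if (∀ t : ℤ, 0 ≤ c (X t ω) t)
        then sSup ((fun τ : ℕ => ((τ : ℝ) : EReal)) ''
          {τ : ℕ | ∀ κ : Fin n → ℤ, (∀ i, |κ i| ≤ (τ : ℤ)) →
            beta c (ashift (fun t => X t ω) κ) = beta c (fun t => X t ω)})
        else - sSup ((fun τ : ℕ => ((τ : ℝ) : EReal)) ''
          {τ : ℕ | ∀ κ : Fin n → ℤ, (∀ i, |κ i| ≤ (τ : ℤ)) →
            beta c (ashift (fun t => X t ω) κ) = beta c (fun t => X t ω)}) := by
    funext ω
    unfold theta beta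
    by_cases h : ∀ t : ℤ, 0 ≤ c (X t ω) t
    · simp only [h, if_pos]
      norm_num
    · simp only [h, if_neg, not_false_iff]
      norm_num
  rw [key]
  have hB : MeasurableSet {ω : Ω | ∀ t : ℤ, 0 ≤ c (X t ω) t} := by
    have : {ω : Ω | ∀ t : ℤ, 0 ≤ c (X t ω) t} = ⋂ t : ℤ, {ω | 0 ≤ c (X t ω) t} := by
      ext ω; simp
    rw [this]
    exact MeasurableSet.iInter fun t =>
      measurableSet_le measurable_const ((hc t).comp (hX t))
  exact Measurable.ite hB hG hG.neg
end
end

section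
/- Let R be a monotone and translationally invariant risk measure, X a stochastic process, c a measurable constraint function, d ∈ ℕ, and ξ : Ω → [-d,d] ∩ ℤ a measurable shift random variable with X_ξ(t,ω) := X(t+ξ(ω),ω). Then R(−η^c(X_ξ)) ≤ R(−η^c(X)) + d. -/
open scoped Classical

noncomputable section

namespace StmtAux

variable {n : ℕ}

def S (c : (Fin n → ℝ) → ℤ → ℝ) (x : ℤ → Fin n → ℝ) : Set ℕ :=
  {τ : ℕ | ∀ κ : ℤ, |κ| ≤ (τ : ℤ) → beta c (shift x κ) = beta c x}

lemma eta_eq (c : (Fin n → ℝ) → ℤ → ℝ) (x : ℤ → Fin n → ℝ) :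
    eta c x = ((beta c x : ℝ) : EReal) *
      sSup ((fun τ : ℕ => ((τ : ℝ) : EReal)) '' S c x) := rfl

lemma shift_zero (x : ℤ → Fin n → ℝ) : shift x 0 = x := by
  funext t; simp [shift]

lemma shift_shift (x : ℤ → Fin n → ℝ) (κ0 κ : ℤ) :
    shift (shift x κ0) κ = shift x (κ + κ0) := by
  funext t; simp [shift, add_assoc]

lemma zero_mem (c : (Fin n → ℝ) → ℤ → ℝ) (x : ℤ → Fin n → ℝ) : 0 ∈ S c x := by
  intro κ hκ
  have hκ0 : κ = 0 := abs_nonpos_iff.mp (by simpa using hκ)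
  subst hκ0
  rw [shift_zero]

lemma dc (c : (Fin n → ℝ) → ℤ → ℝ) (x : ℤ → Fin n → ℝ) {τ τ' : ℕ}
    (h : τ' ≤ τ) (hτ : τ ∈ S c x) : τ' ∈ S c x := by
  intro κ hκ
  exact hτ κ (by omega)

lemma beta_cases (c : (Fin n → ℝ) → ℤ → ℝ) (x : ℤ → Fin n → ℝ) :
    beta c x = 1 ∨ beta c x = -1 := by
  unfold beta; split <;> simp

lemma bdd (c : (Fin n → ℝ) → ℤ → ℝ) (x : ℤ → Fin n → ℝ)
    (hfin : eta c x ≠ ⊤ ∧ eta c x ≠ ⊥) : BddAbove (S c x) := by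
  by_contra hb
  have hall : ∀ m : ℕ, m ∈ S c x := by
    intro m
    obtain ⟨τ, hτ, hlt⟩ := not_bddAbove_iff.mp hb m
    exact dc c x hlt.le hτ
  have hsup : sSup ((fun τ : ℕ => ((τ : ℝ) : EReal)) '' S c x) = ⊤ := by
    rw [sSup_eq_top]
    intro b hb'
    induction b using EReal.rec with
    | bot => exact ⟨((0:ℕ):ℝ), ⟨0, hall 0, rfl⟩, by simp⟩
    | coe r =>
        obtain ⟨m, hm⟩ := exists_nat_gt r
        exact ⟨((m:ℕ):ℝ), ⟨m, hall m, rfl⟩, by exact_mod_cast hm⟩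
    | top => exact absurd hb' (lt_irrefl _)
  rcases beta_cases c x with h1 | h1
  · apply hfin.1
    rw [eta_eq, hsup, h1]
    simp
  · apply hfin.2
    rw [eta_eq, hsup, h1]
    rw [show (((-1 : ℤ) : ℝ) : EReal) = ((-1 : ℝ) : EReal) by norm_num]
    exact EReal.mul_top_of_neg (by exact_mod_cast (by norm_num : (-1:ℝ) < 0))

lemma sup_eq (c : (Fin n → ℝ) → ℤ → ℝ) (x : ℤ → Fin n → ℝ) (hb : BddAbove (S c x)) :
    sSup ((fun τ : ℕ => ((τ : ℝ) : EReal)) '' S c x)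
      = ((((sSup (S c x) : ℕ) : ℝ)) : EReal) := by
  have hne : (S c x).Nonempty := ⟨0, zero_mem c x⟩
  have hmem : sSup (S c x) ∈ S c x := Nat.sSup_mem hne hb
  apply le_antisymm
  · apply sSup_le
    rintro a ⟨τ, hτ, rfl⟩
    have h1 : τ ≤ sSup (S c x) := le_csSup hb hτ
    show ((τ : ℝ) : EReal) ≤ _
    exact_mod_cast h1
  · exact le_sSup ⟨_, hmem, rfl⟩

lemma eta_toReal (c : (Fin n → ℝ) → ℤ → ℝ) (x : ℤ → Fin n → ℝ) (hb : BddAbove (S c x)) :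
    (eta c x).toReal = (beta c x : ℝ) * (((sSup (S c x) : ℕ)) : ℝ) := by
  rw [eta_eq, sup_eq c x hb, ← EReal.coe_mul, EReal.toReal_coe]

/-- If the betas agree after a shift by κ0 with |κ0| ≤ d, suprema differ by at most d. -/
lemma caseA (c : (Fin n → ℝ) → ℤ → ℝ) (x : ℤ → Fin n → ℝ) (κ0 : ℤ) (d : ℕ)
    (hκ0 : |κ0| ≤ (d : ℤ))
    (hbx : BddAbove (S c x)) (hby : BddAbove (S c (shift x κ0)))
    (heq : beta c (shift x κ0) = beta c x) :
    sSup (S c x) ≤ sSup (S c (shift x κ0)) + d := by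
  rcases le_or_gt (sSup (S c x)) d with h | h
  · omega
  · have hmemx : sSup (S c x) ∈ S c x := Nat.sSup_mem ⟨0, zero_mem c x⟩ hbx
    have hmem : sSup (S c x) - d ∈ S c (shift x κ0) := by
      intro κ hκ
      rw [shift_shift]
      rw [hmemx (κ + κ0) (by
        rw [abs_le] at hκ hκ0 ⊢
        omega), heq]
    have := le_csSup hby hmem
    omega

/-- If the betas disagree after a shift by κ0 with |κ0| ≤ d, the suprema sum to at most d. -/
lemma caseB (c : (Fin n → ℝ) → ℤ → ℝ) (x : ℤ → Fin n → ℝ) (κ0 : ℤ) (d : ℕ)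
    (hκ0 : |κ0| ≤ (d : ℤ))
    (hbx : BddAbove (S c x)) (hby : BddAbove (S c (shift x κ0)))
    (hne : beta c (shift x κ0) ≠ beta c x) :
    sSup (S c x) + sSup (S c (shift x κ0)) ≤ d := by
  have hmemx : sSup (S c x) ∈ S c x := Nat.sSup_mem ⟨0, zero_mem c x⟩ hbx
  have hmemy : sSup (S c (shift x κ0)) ∈ S c (shift x κ0) :=
    Nat.sSup_mem ⟨0, zero_mem c _⟩ hby
  have hNxlt : ((sSup (S c x) : ℕ) : ℤ) < |κ0| := by
    by_contra h
    push_neg at h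
    exact hne (hmemx κ0 h)
  by_contra hcon
  push_neg at hcon
  rw [abs_le] at hκ0
  have hx : ∃ κ : ℤ, |κ| ≤ ((sSup (S c (shift x κ0)) : ℕ) : ℤ) ∧
      |κ + κ0| ≤ ((sSup (S c x) : ℕ) : ℤ) := by
    rcases le_or_gt 0 κ0 with h0 | h0
    · rw [abs_of_nonneg h0] at hNxlt
      refine ⟨((sSup (S c x) : ℕ) : ℤ) - κ0, ?_, ?_⟩ <;> rw [abs_le] <;>
        constructor <;> omega
    · rw [abs_of_neg h0] at hNxlt
      refine ⟨-((sSup (S c x) : ℕ) : ℤ) - κ0, ?_, ?_⟩ <;> rw [abs_le] <;>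
        constructor <;> omega
  obtain ⟨κ, hκ1, hκ2⟩ := hx
  have h1 := hmemy κ hκ1
  rw [shift_shift] at h1
  exact hne (h1.symm.trans (hmemx (κ + κ0) hκ2))

lemma key (c : (Fin n → ℝ) → ℤ → ℝ) (x : ℤ → Fin n → ℝ) (κ0 : ℤ) (d : ℕ)
    (hκ0 : |κ0| ≤ (d : ℤ))
    (hfx : eta c x ≠ ⊤ ∧ eta c x ≠ ⊥)
    (hfy : eta c (shift x κ0) ≠ ⊤ ∧ eta c (shift x κ0) ≠ ⊥) :
    -(eta c (shift x κ0)).toReal ≤ -(eta c x).toReal + (d : ℝ) := by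
  have hbx := bdd c x hfx
  have hby := bdd c (shift x κ0) hfy
  rw [eta_toReal c x hbx, eta_toReal c _ hby]
  by_cases heq : beta c (shift x κ0) = beta c x
  · have h1 : sSup (S c x) ≤ sSup (S c (shift x κ0)) + d := caseA c x κ0 d hκ0 hbx hby heq
    have h2 : sSup (S c (shift x κ0)) ≤ sSup (S c x) + d := by
      have hx' : shift (shift x κ0) (-κ0) = x := by
        rw [shift_shift, neg_add_cancel, shift_zero]
      have := caseA c (shift x κ0) (-κ0) d (by rwa [abs_neg]) hby
        (by rwa [hx']) (by rw [hx', heq])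
      rwa [hx'] at this
    have h1' : ((sSup (S c x) : ℕ) : ℝ) ≤ ((sSup (S c (shift x κ0)) : ℕ) : ℝ) + d := by
      exact_mod_cast h1
    have h2' : ((sSup (S c (shift x κ0)) : ℕ) : ℝ) ≤ ((sSup (S c x) : ℕ) : ℝ) + d := by
      exact_mod_cast h2
    rw [heq]
    rcases beta_cases c x with h | h <;> rw [h] <;> push_cast <;> linarith
  · have h3 : sSup (S c x) + sSup (S c (shift x κ0)) ≤ d := caseB c x κ0 d hκ0 hbx hby heq
    have h3' : ((sSup (S c x) : ℕ) : ℝ) + ((sSup (S c (shift x κ0)) : ℕ) : ℝ) ≤ d := by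
      exact_mod_cast h3
    have g1 : (0:ℝ) ≤ ((sSup (S c x) : ℕ) : ℝ) := Nat.cast_nonneg _
    have g2 : (0:ℝ) ≤ ((sSup (S c (shift x κ0)) : ℕ) : ℝ) := Nat.cast_nonneg _
    rcases beta_cases c x with h | h <;> rcases beta_cases c (shift x κ0) with h' | h' <;>
      first
        | exact absurd (h'.trans h.symm) heq
        | (rw [h, h']; push_cast; linarith)

end StmtAux

/-- R(−η^c(X_ξ)) ≤ R(−η^c(X)) + d for a random shift ξ bounded by d. -/
theorem stmt8 {n : ℕ} {Ω : Type*} [MeasurableSpace Ω]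
    (X : ℤ → Ω → Fin n → ℝ) (c : (Fin n → ℝ) → ℤ → ℝ)
    (R : (Ω → ℝ) → ℝ)
    (hMono : ∀ Z Z' : Ω → ℝ, (∀ ω, Z ω ≤ Z' ω) → R Z ≤ R Z')
    (hTrans : ∀ (Z : Ω → ℝ) (a : ℝ), R (fun ω => Z ω + a) = R Z + a)
    (d : ℕ) (ξ : Ω → ℤ) (hξmeas : Measurable ξ) (hξ : ∀ ω, |ξ ω| ≤ (d : ℤ))
    (hfin : ∀ ω, eta c (fun t => X t ω) ≠ ⊤ ∧ eta c (fun t => X t ω) ≠ ⊥)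
    (hfinξ : ∀ ω, eta c (fun t => X (t + ξ ω) ω) ≠ ⊤ ∧ eta c (fun t => X (t + ξ ω) ω) ≠ ⊥) :
    R (fun ω => -(eta c (fun t => X (t + ξ ω) ω)).toReal)
      ≤ R (fun ω => -(eta c (fun t => X t ω)).toReal) + (d : ℝ) := by
  rw [← hTrans (fun ω => -(eta c (fun t => X t ω)).toReal) (d : ℝ)]
  apply hMono
  intro ω
  exact StmtAux.key c (fun t => X t ω) (ξ ω) d (hξ ω) (hfin ω) (hfinξ ω)
end
end

section
/- Under the same hypotheses with a deterministic shift ξ ∈ ℤ, R(−η^c(X_ξ)) ≤ R(−η^c(X)) + |ξ|, where X_ξ(t,ω) := X(t+ξ,ω). -/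
open scoped Classical

noncomputable section

namespace Aux

variable {n : ℕ} (c : (Fin n → ℝ) → ℤ → ℝ)

def S (x : ℤ → Fin n → ℝ) : Set ℕ :=
  {τ : ℕ | ∀ κ : ℤ, |κ| ≤ (τ : ℤ) → beta c (shift x κ) = beta c x}

lemma eta_def (x : ℤ → Fin n → ℝ) :
    eta c x = ((beta c x : ℝ) : EReal) *
      sSup ((fun τ : ℕ => ((τ : ℝ) : EReal)) '' S c x) := rfl

lemma shift_zero (x : ℤ → Fin n → ℝ) : shift x 0 = x := by
  funext t; simp [shift]

lemma shift_shift (x : ℤ → Fin n → ℝ) (a b : ℤ) :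
    shift (shift x a) b = shift x (b + a) := by
  funext t; simp [shift, add_assoc]

lemma beta_cases (x : ℤ → Fin n → ℝ) : beta c x = 1 ∨ beta c x = -1 := by
  unfold beta; split <;> simp

lemma zero_mem_S (x : ℤ → Fin n → ℝ) : (0 : ℕ) ∈ S c x := by
  intro κ hκ
  have : κ = 0 := by
    have := abs_nonneg κ
    have : |κ| = 0 := le_antisymm (by exact_mod_cast hκ) this
    exact abs_eq_zero.mp this
  rw [this, shift_zero]

lemma S_dcl {x : ℤ → Fin n → ℝ} {τ τ' : ℕ} (h : τ' ≤ τ) (hτ : τ ∈ S c x) :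
    τ' ∈ S c x :=
  fun κ hκ => hτ κ (hκ.trans (by exact_mod_cast h))

lemma exists_max (x : ℤ → Fin n → ℝ) (hfin : eta c x ≠ ⊤ ∧ eta c x ≠ ⊥) :
    ∃ T : ℕ, T ∈ S c x ∧ (∀ τ ∈ S c x, τ ≤ T) ∧
      (eta c x).toReal = (beta c x : ℝ) * (T : ℝ) := by
  have h0 : (0:ℕ) ∈ S c x := zero_mem_S c x
  have hbdd : BddAbove (S c x) := by
    by_contra hb
    have hall : ∀ m : ℕ, m ∈ S c x := by
      intro m
      rw [not_bddAbove_iff'] at hb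
      obtain ⟨a, ha, hma⟩ := hb m
      exact S_dcl c (le_of_not_ge hma) ha
    have htop : sSup ((fun τ : ℕ => ((τ : ℝ) : EReal)) '' S c x) = ⊤ := by
      rw [sSup_eq_top]
      intro b hb'
      induction b using EReal.rec with
      | bot => exact ⟨((0:ℕ):ℝ), ⟨0, hall 0, rfl⟩, EReal.bot_lt_coe _⟩
      | coe r =>
        obtain ⟨m, hm⟩ := exists_nat_gt r
        exact ⟨((m:ℝ):EReal), ⟨m, hall m, rfl⟩, by exact_mod_cast hm⟩
      | top => exact absurd hb' (lt_irrefl _)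
    rcases beta_cases c x with hβ | hβ
    · apply hfin.1
      rw [eta_def, htop, hβ]
      norm_num
    · apply hfin.2
      rw [eta_def, htop, hβ]
      have hlt : ((((-1:ℤ)):ℝ):EReal) < 0 := by
        exact_mod_cast (by norm_num : ((-1:ℤ):ℝ) < 0)
      exact EReal.mul_top_of_neg hlt
  have hne : (S c x).Nonempty := ⟨0, h0⟩
  refine ⟨sSup (S c x), Nat.sSup_mem hne hbdd, fun τ hτ => le_csSup hbdd hτ, ?_⟩
  have hsup : sSup ((fun τ : ℕ => ((τ : ℝ) : EReal)) '' S c x)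
      = (((sSup (S c x) : ℕ) : ℝ) : EReal) := by
    apply le_antisymm
    · apply sSup_le
      rintro a ⟨τ, hτ, rfl⟩
      have : τ ≤ sSup (S c x) := le_csSup hbdd hτ
      show ((τ:ℝ):EReal) ≤ _
      exact_mod_cast this
    · exact le_sSup ⟨_, Nat.sSup_mem hne hbdd, rfl⟩
  rw [eta_def, hsup, ← EReal.coe_mul, EReal.toReal_coe]

lemma sub1 {x : ℤ → Fin n → ℝ} {ξ : ℤ}
    (h : beta c (shift x ξ) = beta c x)
    {τ T : ℕ} (hτ : τ ∈ S c x)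
    (hT : ∀ σ ∈ S c (shift x ξ), σ ≤ T) :
    (τ : ℤ) ≤ (T : ℤ) + |ξ| := by
  have hA : (ξ.natAbs : ℤ) = |ξ| := Int.natCast_natAbs ξ
  rcases le_or_gt (τ:ℤ) |ξ| with hle | hlt
  · omega
  · set m : ℕ := τ - ξ.natAbs with hm
    have hmz : (m:ℤ) = (τ:ℤ) - |ξ| := by
      have : ξ.natAbs ≤ τ := by omega
      push_cast [hm, this]
      omega
    have hmem : m ∈ S c (shift x ξ) := by
      intro κ hκ
      rw [shift_shift]
      have hb : |κ + ξ| ≤ (τ:ℤ) := by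
        calc |κ + ξ| ≤ |κ| + |ξ| := abs_add_le _ _
          _ ≤ (m:ℤ) + |ξ| := by omega
          _ = (τ:ℤ) := by omega
      rw [hτ (κ + ξ) hb, h]
    have := hT m hmem
    omega

lemma sub2 {x : ℤ → Fin n → ℝ} {ξ : ℤ}
    (hx : beta c x = 1) (hy : beta c (shift x ξ) = -1)
    {τ σ : ℕ} (hτ : τ ∈ S c x) (hσ : σ ∈ S c (shift x ξ)) :
    (τ : ℤ) + (σ : ℤ) < |ξ| := by
  by_contra hcon
  push_neg at hcon
  obtain ⟨j, hj1, hj2⟩ : ∃ j : ℤ, |j| ≤ (τ:ℤ) ∧ |j - ξ| ≤ (σ:ℤ) := by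
    rcases le_total 0 ξ with hs | hs
    · rw [abs_of_nonneg hs] at hcon
      rcases le_total ξ (τ:ℤ) with h' | h'
      · exact ⟨ξ, by rw [abs_of_nonneg hs]; exact h', by simp⟩
      · exact ⟨(τ:ℤ), by rw [abs_of_nonneg (by positivity)],
          by rw [abs_of_nonpos (by omega)]; omega⟩
    · rw [abs_of_nonpos hs] at hcon
      rcases le_total (-(τ:ℤ)) ξ with h' | h'
      · exact ⟨ξ, by rw [abs_of_nonpos hs]; omega, by simp⟩
      · exact ⟨-(τ:ℤ), by rw [abs_of_nonpos (by omega)]; omega,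
          by rw [abs_of_nonneg (by omega)]; omega⟩
  have e1 : beta c (shift x j) = 1 := (hτ j hj1).trans hx
  have e2 : beta c (shift x j) = -1 := by
    have := hσ (j - ξ) hj2
    rw [shift_shift, sub_add_cancel] at this
    exact this.trans hy
  exact absurd (e1.symm.trans e2) (by decide)

lemma key {x : ℤ → Fin n → ℝ} (ξ : ℤ)
    (h1 : eta c x ≠ ⊤ ∧ eta c x ≠ ⊥)
    (h2 : eta c (shift x ξ) ≠ ⊤ ∧ eta c (shift x ξ) ≠ ⊥) :
    (eta c x).toReal ≤ (eta c (shift x ξ)).toReal + ((|ξ| : ℤ) : ℝ) := by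
  obtain ⟨Tx, hTx, hTxmax, hEx⟩ := exists_max c x h1
  obtain ⟨Ty, hTy, hTymax, hEy⟩ := exists_max c (shift x ξ) h2
  rw [hEx, hEy]
  have habs : (0:ℝ) ≤ ((|ξ|:ℤ):ℝ) := by positivity
  have hTx0 : (0:ℝ) ≤ (Tx:ℝ) := by positivity
  have hTy0 : (0:ℝ) ≤ (Ty:ℝ) := by positivity
  rcases beta_cases c x with bx | bx <;> rcases beta_cases c (shift x ξ) with by' | by'
  · have h := sub1 c (by rw [by', bx]) hTx hTymax
    have h' : (Tx:ℝ) ≤ (Ty:ℝ) + ((|ξ|:ℤ):ℝ) := by exact_mod_cast h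
    rw [bx, by']; push_cast at h' ⊢; linarith
  · have h := sub2 c bx by' hTx hTy
    have h' : (Tx:ℝ) + (Ty:ℝ) ≤ ((|ξ|:ℤ):ℝ) := by exact_mod_cast h.le
    rw [bx, by']; push_cast at h' ⊢; linarith
  · rw [bx, by']; push_cast at habs ⊢; linarith
  · have hsx : shift (shift x ξ) (-ξ) = x := by
      rw [shift_shift, neg_add_cancel, shift_zero]
    have h := sub1 c (x := shift x ξ) (ξ := -ξ)
      (by rw [hsx, bx, by']) hTy (by rw [hsx]; exact hTxmax)
    rw [abs_neg] at h
    have h' : (Ty:ℝ) ≤ (Tx:ℝ) + ((|ξ|:ℤ):ℝ) := by exact_mod_cast h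
    rw [bx, by']; push_cast at h' ⊢; linarith

end Aux


/-- R(−η^c(X_ξ)) ≤ R(−η^c(X)) + |ξ| for a deterministic shift ξ ∈ ℤ. -/
theorem stmt9 {n : ℕ} {Ω : Type*} [MeasurableSpace Ω]
    (X : ℤ → Ω → Fin n → ℝ) (c : (Fin n → ℝ) → ℤ → ℝ)
    (R : (Ω → ℝ) → ℝ)
    (hMono : ∀ Z Z' : Ω → ℝ, (∀ ω, Z ω ≤ Z' ω) → R Z ≤ R Z')
    (hTrans : ∀ (Z : Ω → ℝ) (a : ℝ), R (fun ω => Z ω + a) = R Z + a)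
    (ξ : ℤ)
    (hfin : ∀ ω, eta c (fun t => X t ω) ≠ ⊤ ∧ eta c (fun t => X t ω) ≠ ⊥)
    (hfinξ : ∀ ω, eta c (fun t => X (t + ξ) ω) ≠ ⊤ ∧ eta c (fun t => X (t + ξ) ω) ≠ ⊥) :
    R (fun ω => -(eta c (fun t => X (t + ξ) ω)).toReal)
      ≤ R (fun ω => -(eta c (fun t => X t ω)).toReal) + ((|ξ| : ℤ) : ℝ) := by
  have hpt : ∀ ω, -(eta c (fun t => X (t + ξ) ω)).toReal
      ≤ -(eta c (fun t => X t ω)).toReal + ((|ξ| : ℤ) : ℝ) := by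
    intro ω
    have h := Aux.key c (x := fun t => X t ω) ξ (hfin ω) (hfinξ ω)
    have he : shift (fun t => X t ω) ξ = fun t => X (t + ξ) ω := rfl
    rw [he] at h
    linarith
  calc R (fun ω => -(eta c (fun t => X (t + ξ) ω)).toReal)
      ≤ R (fun ω => -(eta c (fun t => X t ω)).toReal + ((|ξ| : ℤ) : ℝ)) :=
        hMono _ _ hpt
    _ = R (fun ω => -(eta c (fun t => X t ω)).toReal) + ((|ξ| : ℤ) : ℝ) :=
        hTrans _ _
end
end

section
/- Let R be a monotone and translationally invariant risk measure, d ∈ ℕ, and ξ_1,…,ξ_n : Ω → [-d,d] ∩ ℤ measurable shift random variables. Define X_ξ̄(t,ω) := (X_{1}(t+ξ_1(ω),ω),…,X_{n}(t+ξ_n(ω),ω)). Then R(−θ^c(X_ξ̄)) ≤ R(−θ^c(X)) + d. -/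
open scoped Classical

noncomputable section

/-! ### auxiliary lemmas -/

def Sset {n : ℕ} (c : (Fin n → ℝ) → ℤ → ℝ) (x : ℤ → Fin n → ℝ) : Set ℕ :=
  {τ : ℕ | ∀ κ : Fin n → ℤ, (∀ i, |κ i| ≤ (τ : ℤ)) → beta c (ashift x κ) = beta c x}

lemma theta_def {n : ℕ} (c : (Fin n → ℝ) → ℤ → ℝ) (x : ℤ → Fin n → ℝ) :
    theta c x = ((beta c x : ℝ) : EReal) *
      sSup ((fun τ : ℕ => ((τ : ℝ) : EReal)) '' Sset c x) := rfl

lemma beta_cases {n : ℕ} (c : (Fin n → ℝ) → ℤ → ℝ) (x : ℤ → Fin n → ℝ) :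
    beta c x = 1 ∨ beta c x = -1 := by
  unfold beta; split_ifs <;> simp

lemma ashift_zero {n : ℕ} (x : ℤ → Fin n → ℝ) : ashift x (fun _ => 0) = x := by
  funext t i; simp [ashift]

lemma ashift_ashift {n : ℕ} (x : ℤ → Fin n → ℝ) (κ0 κ : Fin n → ℤ) :
    ashift (ashift x κ0) κ = ashift x (fun i => κ0 i + κ i) := by
  funext t i
  show x (t + κ i + κ0 i) i = x (t + (κ0 i + κ i)) i
  ring_nf

lemma Sset_zero_mem {n : ℕ} (c : (Fin n → ℝ) → ℤ → ℝ) (x : ℤ → Fin n → ℝ) :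
    0 ∈ Sset c x := by
  intro κ hκ
  have : κ = fun _ => 0 := by
    funext i
    have h := abs_le.mp (hκ i)
    omega
  rw [this, ashift_zero]

lemma Sset_mono {n : ℕ} {c : (Fin n → ℝ) → ℤ → ℝ} {x : ℤ → Fin n → ℝ} {τ τ' : ℕ}
    (h : τ ∈ Sset c x) (hle : τ' ≤ τ) : τ' ∈ Sset c x := by
  intro κ hκ
  exact h κ fun i => (hκ i).trans (by exact_mod_cast hle)

/-- From finiteness of `theta` extract the maximal element of `Sset` and the value formula. -/
lemma exists_max {n : ℕ} (c : (Fin n → ℝ) → ℤ → ℝ) (x : ℤ → Fin n → ℝ)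
    (h1 : theta c x ≠ ⊤) (h2 : theta c x ≠ ⊥) :
    ∃ m : ℕ, m ∈ Sset c x ∧ (∀ τ ∈ Sset c x, τ ≤ m) ∧
      (theta c x).toReal = (beta c x : ℝ) * (m : ℝ) := by
  set S := Sset c x with hS
  set sup := sSup ((fun τ : ℕ => ((τ : ℝ) : EReal)) '' S) with hsup
  have hsupne : sup ≠ ⊤ := by
    intro htop
    rcases beta_cases c x with hb | hb
    · apply h1; rw [theta_def, ← hS, ← hsup, htop, hb]; norm_num
    · apply h2; rw [theta_def, ← hS, ← hsup, htop, hb]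
      have hcast : (((-1 : ℤ) : ℝ) : EReal) = ((-1 : ℝ) : EReal) := by norm_num
      rw [hcast]
      exact EReal.mul_top_of_neg (by exact_mod_cast (by norm_num : (-1:ℝ) < (0:ℝ)))
  have hbdd : BddAbove S := by
    by_contra hub
    apply hsupne
    have hall : ∀ N : ℕ, ((N : ℝ) : EReal) ≤ sup := by
      intro N
      obtain ⟨τ, hτS, hτ⟩ : ∃ τ ∈ S, N ≤ τ := by
        by_contra hcon
        push_neg at hcon
        exact hub ⟨N, fun τ hτ => le_of_lt (hcon τ hτ)⟩
      calc ((N : ℝ) : EReal) ≤ ((τ : ℝ) : EReal) := by exact_mod_cast hτ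
        _ ≤ sup := le_sSup ⟨τ, hτS, rfl⟩
    by_contra hne
    have hbot : sup ≠ ⊥ := by
      intro hb
      have := hall 0
      rw [hb] at this
      simp at this
    have heq := (EReal.coe_toReal hne hbot).symm
    obtain ⟨N, hN⟩ := exists_nat_gt sup.toReal
    have := hall N
    rw [heq] at this
    exact absurd (EReal.coe_le_coe_iff.mp this) (not_le.mpr hN)
  have hne : S.Nonempty := ⟨0, Sset_zero_mem c x⟩
  refine ⟨sSup S, Nat.sSup_mem hne hbdd, fun τ hτ => le_csSup hbdd hτ, ?_⟩
  have hsupval : sup = (((sSup S : ℕ) : ℝ) : EReal) := by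
    apply le_antisymm
    · apply sSup_le
      rintro _ ⟨τ, hτ, rfl⟩
      have : τ ≤ sSup S := le_csSup hbdd hτ
      show ((τ : ℝ) : EReal) ≤ (((sSup S : ℕ) : ℝ) : EReal)
      exact_mod_cast this
    · exact le_sSup ⟨sSup S, Nat.sSup_mem hne hbdd, rfl⟩
  rw [theta_def, ← hS, ← hsup, hsupval, ← EReal.coe_mul, EReal.toReal_coe]

/-- The key pointwise inequality. -/
lemma key {n : ℕ} (c : (Fin n → ℝ) → ℤ → ℝ) (x : ℤ → Fin n → ℝ) (κ0 : Fin n → ℤ) (d : ℕ)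
    (hκ0 : ∀ i, |κ0 i| ≤ (d : ℤ))
    (h1 : theta c x ≠ ⊤) (h2 : theta c x ≠ ⊥)
    (h1' : theta c (ashift x κ0) ≠ ⊤) (h2' : theta c (ashift x κ0) ≠ ⊥) :
    (theta c x).toReal - (d : ℝ) ≤ (theta c (ashift x κ0)).toReal := by
  obtain ⟨m, hmS, hmax, hval⟩ := exists_max c x h1 h2
  obtain ⟨m', hmS', hmax', hval'⟩ := exists_max c (ashift x κ0) h1' h2'
  set x' := ashift x κ0 with hx'
  rw [hval, hval']
  rcases beta_cases c x with hb | hb <;> rcases beta_cases c x' with hb' | hb' <;>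
    rw [hb, hb'] <;> push_cast
  · -- β = 1, β' = 1 : show m - d ≤ m'
    by_cases hdm : d ≤ m
    · -- m - d ∈ S'
      have hmem : (m - d : ℕ) ∈ Sset c x' := by
        intro κ hκ
        rw [hx', ashift_ashift]
        have h1 : beta c (ashift x fun i => κ0 i + κ i) = beta c x := by
          apply hmS
          intro i
          have hk := abs_le.mp (hκ i)
          have h0 := abs_le.mp (hκ0 i)
          have hcast : ((m - d : ℕ) : ℤ) = (m : ℤ) - d := by
            push_cast [hdm]; ring
          rw [abs_le]
          omega
        have h2 : beta c x' = beta c x := by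
          rw [hx']
          apply hmS
          intro i
          exact (hκ0 i).trans (by exact_mod_cast hdm)
        rw [h1, h2]
      have : (m - d : ℕ) ≤ m' := hmax' _ hmem
      have : ((m - d : ℕ) : ℝ) ≤ (m' : ℝ) := by exact_mod_cast this
      rw [Nat.cast_sub hdm] at this
      linarith
    · push_neg at hdm
      have : (m : ℝ) ≤ (d : ℝ) := by exact_mod_cast hdm.le
      have h0 : (0 : ℝ) ≤ (m' : ℝ) := Nat.cast_nonneg _
      linarith
  · -- β = 1, β' = -1 : show m + m' < d
    have hmd : m < d := by
      by_contra hcon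
      push_neg at hcon
      have : beta c x' = beta c x := by
        rw [hx']; apply hmS; intro i; exact (hκ0 i).trans (by exact_mod_cast hcon)
      rw [hb, hb'] at this; omega
    have hlt : m' + m < d := by
      by_contra hcon
      push_neg at hcon
      -- clamp construction
      set κ : Fin n → ℤ := fun i =>
        if κ0 i > (m' : ℤ) then -(m' : ℤ) else if κ0 i < -(m' : ℤ) then (m' : ℤ) else -κ0 i
        with hκdef
      have hκb : ∀ i, |κ i| ≤ (m' : ℤ) := by
        intro i
        have h0 := hκ0 i
        rw [abs_le] at h0 ⊢
        simp only [hκdef]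
        split_ifs <;> omega
      have hsum : ∀ i, |κ0 i + κ i| ≤ (m : ℤ) := by
        intro i
        have h0 := hκ0 i
        have hcon' : (d : ℤ) ≤ (m' : ℤ) + m := by exact_mod_cast hcon
        rw [abs_le] at h0 ⊢
        simp only [hκdef]
        split_ifs <;> omega
      have heq1 : beta c (ashift x' κ) = beta c x' := hmS' κ hκb
      have heq2 : beta c (ashift x' κ) = beta c x := by
        rw [hx', ashift_ashift]
        exact hmS _ hsum
      rw [hb] at heq2; rw [heq2, hb'] at heq1; omega
    have : ((m' : ℝ) + m < (d : ℝ)) := by exact_mod_cast hlt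
    linarith
  · -- β = -1, β' = 1
    have h0 : (0 : ℝ) ≤ (m' : ℝ) := Nat.cast_nonneg _
    have h0' : (0 : ℝ) ≤ (m : ℝ) := Nat.cast_nonneg _
    have h0'' : (0 : ℝ) ≤ (d : ℝ) := Nat.cast_nonneg _
    linarith
  · -- β = -1, β' = -1 : show m' ≤ m + d
    have hnot : (m + 1) ∉ Sset c x := fun h => by have := hmax _ h; omega
    have hle : m' ≤ m + d := by
      by_contra hcon
      push_neg at hcon
      obtain ⟨κ1, hκ1, hκ1ne⟩ : ∃ κ1 : Fin n → ℤ, (∀ i, |κ1 i| ≤ ((m+1 : ℕ) : ℤ)) ∧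
          beta c (ashift x κ1) ≠ beta c x := by
        by_contra hc
        push_neg at hc
        exact hnot fun κ hκ => hc κ hκ
      have hmem := hmS' (fun i => κ1 i - κ0 i) (by
        intro i
        have hk1 := abs_le.mp (hκ1 i)
        have h0 := abs_le.mp (hκ0 i)
        have hc : ((m : ℤ) + d < (m' : ℤ)) := by exact_mod_cast hcon
        rw [abs_le]
        push_cast at hk1 ⊢
        omega)
      rw [hx', ashift_ashift] at hmem
      have : (fun i => κ0 i + (κ1 i - κ0 i)) = κ1 := by funext i; ring
      rw [this] at hmem
      have hbx' : beta c x' = beta c x := by rw [hb, hb']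
      rw [hbx'] at hmem
      exact hκ1ne hmem
    have : (m' : ℝ) ≤ (m : ℝ) + d := by exact_mod_cast hle
    linarith
  
/-- R(−θ^c(X_ξ̄)) ≤ R(−θ^c(X)) + d for random shifts ξ_1,…,ξ_n bounded by d. -/
theorem stmt10 {n : ℕ} {Ω : Type*} [MeasurableSpace Ω]
    (X : ℤ → Ω → Fin n → ℝ) (c : (Fin n → ℝ) → ℤ → ℝ)
    (R : (Ω → ℝ) → ℝ)
    (hMono : ∀ Z Z' : Ω → ℝ, (∀ ω, Z ω ≤ Z' ω) → R Z ≤ R Z')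
    (hTrans : ∀ (Z : Ω → ℝ) (a : ℝ), R (fun ω => Z ω + a) = R Z + a)
    (d : ℕ) (ξ : Fin n → Ω → ℤ) (hξmeas : ∀ i, Measurable (ξ i))
    (hξ : ∀ i ω, |ξ i ω| ≤ (d : ℤ))
    (hfin : ∀ ω, theta c (fun t => X t ω) ≠ ⊤ ∧ theta c (fun t => X t ω) ≠ ⊥)
    (hfinξ : ∀ ω, theta c (fun t i => X (t + ξ i ω) ω i) ≠ ⊤ ∧
      theta c (fun t i => X (t + ξ i ω) ω i) ≠ ⊥) :
    R (fun ω => -(theta c (fun t i => X (t + ξ i ω) ω i)).toReal)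
      ≤ R (fun ω => -(theta c (fun t => X t ω)).toReal) + (d : ℝ) := by
  rw [← hTrans (fun ω => -(theta c (fun t => X t ω)).toReal) (d : ℝ)]
  apply hMono
  intro ω
  have heq : (theta c fun t i => X (t + ξ i ω) ω i)
      = theta c (ashift (fun t => X t ω) fun i => ξ i ω) := rfl
  have h := key c (fun t => X t ω) (fun i => ξ i ω) d (fun i => hξ i ω)
    (hfin ω).1 (hfin ω).2 (hfinξ ω).1 (hfinξ ω).2
  rw [heq]
  linarith
end
end
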